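/- Consider a database D, a canonical set Σ of FDs with an LHS chain, and an SJFCQ Q. Then rfreq(Q, D, Σ) = rfreq(Q, D \ (D_conf^{Σ,Q} ∪ D_ind^{Σ,Q}), Σ) × (|rep(D \ D_conf^{Σ,Q}, Σ)| / |rep(D, Σ)|). -/

import Mathlib

open scoped Classical

/-- A fact over relation name `rel`, assigning a constant to each attribute. -/
structure DBFact (Rel Attr Const : Type*) where
  rel : Rel
  val : Attr → Const

/-- A functional dependency `rel : lhs → rhs`. -/
structure DBFD (Rel Attr : Type*) where
  rel : Rel
  lhs : Set Attr
  rhs : Set Attr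

/-- A term of a conjunctive query: a variable or a constant. -/
inductive DBTerm (Var Const : Type*) where
  | var : Var → DBTerm Var Const
  | const : Const → DBTerm Var Const

/-- An atom of a conjunctive query. -/
structure DBAtom (Rel Attr Var Const : Type*) where
  rel : Rel
  val : Attr → DBTerm Var Const

variable {Rel Attr Var Const : Type*}

/-- A database satisfies a single FD. -/
def satFD (D : Finset (DBFact Rel Attr Const)) (φ : DBFD Rel Attr) : Prop :=
  ∀ f ∈ D, ∀ g ∈ D, f.rel = φ.rel → g.rel = φ.rel →
    (∀ A ∈ φ.lhs, f.val A = g.val A) → ∀ A ∈ φ.rhs, f.val A = g.val A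

/-- A database satisfies a set of FDs. -/
def satFDs (D : Finset (DBFact Rel Attr Const)) (S : Set (DBFD Rel Attr)) : Prop :=
  ∀ φ ∈ S, satFD D φ

/-- `E` is a repair of `D` w.r.t. `S`: an inclusion-maximal consistent subset of `D`. -/
def isRepair (S : Set (DBFD Rel Attr)) (D E : Finset (DBFact Rel Attr Const)) : Prop :=
  E ⊆ D ∧ satFDs E S ∧ ∀ F, E ⊆ F → F ⊆ D → satFDs F S → F = E

/-- The set of repairs of `D` w.r.t. `S`. -/
noncomputable def rep (D : Finset (DBFact Rel Attr Const)) (S : Set (DBFD Rel Attr)) :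
    Finset (Finset (DBFact Rel Attr Const)) :=
  D.powerset.filter (fun E => isRepair S D E)

/-- Applying a homomorphism (a map from variables to constants) to an atom yields a fact. -/
def applyHom (h : Var → Const) (α : DBAtom Rel Attr Var Const) : DBFact Rel Attr Const :=
  ⟨α.rel, fun A => match α.val A with
    | DBTerm.var v => h v
    | DBTerm.const c => c⟩

/-- `D ⊨ Q`: there is a homomorphism from the CQ `Q` into `D`. -/
def entails (D : Finset (DBFact Rel Attr Const)) (Q : Finset (DBAtom Rel Attr Var Const)) :
    Prop :=
  ∃ h : Var → Const, ∀ α ∈ Q, applyHom h α ∈ D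

/-- The repairs of `D` w.r.t. `S` that entail `Q`. -/
noncomputable def repQ (D : Finset (DBFact Rel Attr Const)) (S : Set (DBFD Rel Attr))
    (Q : Finset (DBAtom Rel Attr Var Const)) : Finset (Finset (DBFact Rel Attr Const)) :=
  (rep D S).filter (fun E => entails E Q)

/-- The relative frequency of `Q` w.r.t. `D` and `S`. -/
noncomputable def rfreq (Q : Finset (DBAtom Rel Attr Var Const))
    (D : Finset (DBFact Rel Attr Const)) (S : Set (DBFD Rel Attr)) : ℚ :=
  ((repQ D S Q).card : ℚ) / ((rep D S).card : ℚ)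

/-- `Q` is self-join-free: no relation name occurs in two distinct atoms. -/
def sjf (Q : Finset (DBAtom Rel Attr Var Const)) : Prop :=
  ∀ α ∈ Q, ∀ β ∈ Q, α.rel = β.rel → α = β

/-- A canonical set of FDs with an LHS chain, given by the chain
`R : X₁ → Y₁, …, R : Xₙ → Yₙ` for each relation name `R`, with
`X₁ ⊊ X₂ ⊊ ⋯ ⊊ Xₙ`, each `Y_i` nonempty, `X_i ∩ Y_j = ∅` for all `i,j`,
and `Y_i ∩ Y_j = ∅` for `i ≠ j`. -/
def canonicalChain (chain : Rel → List (Set Attr × Set Attr)) : Prop :=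
  ∀ R : Rel,
    ((chain R).Pairwise fun a b => a.1 ⊂ b.1) ∧
    (∀ xy ∈ chain R, (xy.2 : Set Attr).Nonempty) ∧
    (∀ xy ∈ chain R, ∀ xy' ∈ chain R, xy.1 ∩ xy'.2 = ∅) ∧
    ((chain R).Pairwise fun a b => a.2 ∩ b.2 = ∅)

/-- The set of FDs induced by a chain. -/
def chainFDs (chain : Rel → List (Set Attr × Set Attr)) : Set (DBFD Rel Attr) :=
  {φ | ∃ xy ∈ chain φ.rel, φ.lhs = xy.1 ∧ φ.rhs = xy.2}

/-- The `i`-th FD of the chain `L` has some attribute carrying a variable in atom `α`. -/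
def chainVarAt (L : List (Set Attr × Set Attr)) (α : DBAtom Rel Attr Var Const) (i : ℕ) :
    Prop :=
  ∃ xy, L[i]? = some xy ∧ ∃ A ∈ xy.1 ∪ xy.2, ∃ v, α.val A = DBTerm.var v

/-- The index of the primary FD of the chain `L` w.r.t. the atom `α` (if it exists):
the first FD some of whose attributes carries a variable in `α`. -/
noncomputable def primaryIdx (L : List (Set Attr × Set Attr))
    (α : DBAtom Rel Attr Var Const) : Option ℕ :=
  if h : ∃ i, chainVarAt L α i then some (Nat.find h) else none

/-- The primary FD of the chain `L` w.r.t. the atom `α` (if it exists). -/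
noncomputable def primaryFD (L : List (Set Attr × Set Attr))
    (α : DBAtom Rel Attr Var Const) : Option (Set Attr × Set Attr) :=
  (primaryIdx L α).bind fun i => L[i]?

/-- The primary prefix of the chain `L` w.r.t. the atom `α`: the FDs strictly before the
primary FD, or the whole chain if there is no primary FD. -/
noncomputable def primaryPrefix (L : List (Set Attr × Set Attr))
    (α : DBAtom Rel Attr Var Const) : List (Set Attr × Set Attr) :=
  L.take ((primaryIdx L α).getD L.length)

/-- The primary-lhs positions (attributes) of the atom `α` w.r.t. the chain `L`. -/
noncomputable def primaryLhs (L : List (Set Attr × Set Attr))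
    (α : DBAtom Rel Attr Var Const) : Set Attr :=
  match primaryFD L α with
  | some xy => xy.1
  | none => Set.univ

/-- The variables of `α` occurring at primary-lhs positions. -/
noncomputable def pvar (L : List (Set Attr × Set Attr))
    (α : DBAtom Rel Attr Var Const) : Set Var :=
  {v | ∃ A ∈ primaryLhs L α, α.val A = DBTerm.var v}

/-- A liaison variable of `Q`: a variable with more than one occurrence in `Q`. -/
def liaison (Q : Finset (DBAtom Rel Attr Var Const)) (v : Var) : Prop :=
  ∃ α ∈ Q, ∃ β ∈ Q, ∃ A B, α.val A = DBTerm.var v ∧ β.val B = DBTerm.var v ∧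
    (α ≠ β ∨ A ≠ B)

/-- The complex part `comp(Q,Σ)` of `Q` w.r.t. the chain. -/
noncomputable def compPart (chain : Rel → List (Set Attr × Set Attr))
    (Q : Finset (DBAtom Rel Attr Var Const)) : Finset (DBAtom Rel Attr Var Const) :=
  Q.filter fun α => ∃ A, A ∉ primaryLhs (chain α.rel) α ∧
    ((∃ c, α.val A = DBTerm.const c) ∨ ∃ v, α.val A = DBTerm.var v ∧ liaison Q v) ∧
    ∀ xy ∈ primaryPrefix (chain α.rel) α, A ∉ xy.1 ∪ xy.2

/-- The fact `f` agrees with the atom `α` at attribute `A`, i.e. `α[A]` is the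
constant `f[A]`. -/
def agreesAt (f : DBFact Rel Attr Const) (α : DBAtom Rel Attr Var Const) (A : Attr) : Prop :=
  α.val A = DBTerm.const (f.val A)

/-- `D_conf^{Σ,Q}`: the facts of `D` conflicting with `Q` via an FD of the primary prefix. -/
noncomputable def dconf (chain : Rel → List (Set Attr × Set Attr))
    (Q : Finset (DBAtom Rel Attr Var Const)) (D : Finset (DBFact Rel Attr Const)) :
    Finset (DBFact Rel Attr Const) :=
  D.filter fun f => ∃ α ∈ Q, α.rel = f.rel ∧
    ∃ xy ∈ primaryPrefix (chain α.rel) α,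
      (∀ A ∈ xy.1, agreesAt f α A) ∧ ∃ B ∈ xy.2, ¬ agreesAt f α B

/-- `D_ind^{Σ,Q}`: the facts of `D \ D_conf^{Σ,Q}` disagreeing with `Q` on the lhs of an
FD of the primary prefix. -/
noncomputable def dind (chain : Rel → List (Set Attr × Set Attr))
    (Q : Finset (DBAtom Rel Attr Var Const)) (D : Finset (DBFact Rel Attr Const)) :
    Finset (DBFact Rel Attr Const) :=
  (D \ dconf chain Q D).filter fun f => ∃ α ∈ Q, α.rel = f.rel ∧
    ∃ xy ∈ primaryPrefix (chain α.rel) α, ∃ A ∈ xy.1, ¬ agreesAt f α A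

/-- The active domain of `D`: the constants occurring in `D`. -/
noncomputable def adom [Fintype Attr] (D : Finset (DBFact Rel Attr Const)) : Finset Const :=
  D.biUnion fun f => Finset.univ.image f.val

/-- Substituting a constant for a variable in a term. -/
noncomputable def substTerm (x : Var) (c : Const) : DBTerm Var Const → DBTerm Var Const
  | DBTerm.var v => if v = x then DBTerm.const c else DBTerm.var v
  | DBTerm.const d => DBTerm.const d

/-- Substituting a constant for a variable in an atom. -/
noncomputable def substAtom (x : Var) (c : Const) (α : DBAtom Rel Attr Var Const) :
    DBAtom Rel Attr Var Const :=
  ⟨α.rel, fun A => substTerm x c (α.val A)⟩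

/-- `Q_{x↦c}`: the query obtained from `Q` by replacing the variable `x` with `c`. -/
noncomputable def substQ (x : Var) (c : Const) (Q : Finset (DBAtom Rel Attr Var Const)) :
    Finset (DBAtom Rel Attr Var Const) :=
  Q.image (substAtom x c)

/-- The variables occurring in `Q`. -/
def qvars (Q : Finset (DBAtom Rel Attr Var Const)) : Set Var :=
  {v | ∃ α ∈ Q, ∃ A, α.val A = DBTerm.var v}

/-- `S` has an LHS chain: the left-hand sides of FDs over the same relation are
⊆-comparable. -/
def hasLHSChain (S : Set (DBFD Rel Attr)) : Prop :=
  ∀ φ ∈ S, ∀ ψ ∈ S, φ.rel = ψ.rel → φ.lhs ⊆ ψ.lhs ∨ ψ.lhs ⊆ φ.lhs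


/-!
A fact of `D_conf` agrees with an atom `α` of `Q` on the left-hand side of an FD of the primary
prefix but not on its right-hand side; all these positions carry constants in `α`, so the fact
conflicts with every image `h(α)`. Hence a repair entailing `Q` avoids `D_conf`, and the repairs
of `D` entailing `Q` are exactly those of `D \ D_conf` entailing `Q`.

Inside `D \ D_conf`, a fact `f` of `D_ind` conflicts with no fact `g` of
`D' = D \ (D_conf ∪ D_ind)`, which agrees with `α` on all positions of the primary prefix: a
conflict through an FD beyond the prefix would make `f` agree with `g`, hence with `α`, on the
LHS of the prefix FD where `f` disagrees with `α` (LHS chain), and a conflict through an FD of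
the prefix would put `f` into `D_conf`.
So the repairs of `D \ D_conf` are the unions of a repair of `D'` and a repair of `D_ind`, and by
self-join-freeness no image of an atom of `Q` lies in `D_ind`, so `Q` is entailed by the union
iff it is entailed by its `D'` part. Counting both sides gives the formula.
-/

def Conflict (S : Set (DBFD Rel Attr)) (f g : DBFact Rel Attr Const) : Prop :=
  ∃ φ ∈ S, f.rel = φ.rel ∧ g.rel = φ.rel ∧
    (∀ A ∈ φ.lhs, f.val A = g.val A) ∧ ∃ B ∈ φ.rhs, f.val B ≠ g.val B

section Repairs

variable {S : Set (DBFD Rel Attr)}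

theorem Conflict.symm {f g : DBFact Rel Attr Const} (h : Conflict S f g) : Conflict S g f := by
  obtain ⟨φ, hφ, hf, hg, hlhs, B, hB, hne⟩ := h
  exact ⟨φ, hφ, hg, hf, fun A hA => (hlhs A hA).symm, B, hB, Ne.symm hne⟩

theorem satFDs_iff_forall_not_conflict {E : Finset (DBFact Rel Attr Const)} :
    satFDs E S ↔ ∀ f ∈ E, ∀ g ∈ E, ¬ Conflict S f g := by
  constructor
  · rintro h f hf g hg ⟨φ, hφ, hfφ, hgφ, hlhs, B, hB, hne⟩
    exact hne (h φ hφ f hf g hg hfφ hgφ hlhs B hB)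
  · intro h φ hφ f hf g hg hfφ hgφ hlhs B hB
    by_contra hne
    exact h f hf g hg ⟨φ, hφ, hfφ, hgφ, hlhs, B, hB, hne⟩

theorem satFDs_mono {E F : Finset (DBFact Rel Attr Const)} (hEF : E ⊆ F) (hF : satFDs F S) :
    satFDs E S :=
  fun φ hφ f hf g hg => hF φ hφ f (hEF hf) g (hEF hg)

theorem satFDs_union {E F : Finset (DBFact Rel Attr Const)}
    (hEF : ∀ f ∈ E, ∀ g ∈ F, ¬ Conflict S f g) (hE : satFDs E S) (hF : satFDs F S) :
    satFDs (E ∪ F) S := by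
  rw [satFDs_iff_forall_not_conflict] at hE hF ⊢
  intro f hf g hg
  rcases Finset.mem_union.1 hf with hf | hf <;> rcases Finset.mem_union.1 hg with hg | hg
  · exact hE f hf g hg
  · exact hEF f hf g hg
  · exact fun h => hEF g hg f hf h.symm
  · exact hF f hf g hg

theorem mem_rep {D E : Finset (DBFact Rel Attr Const)} : E ∈ rep D S ↔ isRepair S D E := by
  simp only [rep, Finset.mem_filter, Finset.mem_powerset, and_iff_right_iff_imp]
  exact fun h => h.1

theorem rep_nonempty (D : Finset (DBFact Rel Attr Const)) : (rep D S).Nonempty := by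
  have hempty : ∅ ∈ D.powerset.filter (satFDs · S) :=
    Finset.mem_filter.2 ⟨Finset.empty_mem_powerset D, fun _ _ f hf => absurd hf (by simp)⟩
  obtain ⟨E, hE, hmax⟩ := Finset.exists_maximal ⟨∅, hempty⟩
  simp only [Finset.mem_filter, Finset.mem_powerset] at hE hmax
  exact ⟨E, mem_rep.2 ⟨hE.1, hE.2, fun F hEF hFD hF =>
    (hmax ⟨hFD, hF⟩ hEF).antisymm hEF⟩⟩

theorem subset_sdiff_of_forall_conflict {C D E F : Finset (DBFact Rel Attr Const)}
    (hC : ∀ f ∈ C, ∃ g ∈ E, Conflict S f g) (hEF : E ⊆ F) (hFD : F ⊆ D) (hF : satFDs F S) :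
    F ⊆ D \ C := by
  intro f hf
  refine Finset.mem_sdiff.2 ⟨hFD hf, fun hfC => ?_⟩
  obtain ⟨g, hg, hfg⟩ := hC f hfC
  exact satFDs_iff_forall_not_conflict.1 hF f hf g (hEF hg) hfg

theorem isRepair_sdiff_iff {C D E : Finset (DBFact Rel Attr Const)}
    (hC : ∀ f ∈ C, ∃ g ∈ E, Conflict S f g) : isRepair S (D \ C) E ↔ isRepair S D E := by
  constructor
  · rintro ⟨hED, hE, hmax⟩
    exact ⟨hED.trans Finset.sdiff_subset, hE, fun F hEF hFD hF =>
      hmax F hEF (subset_sdiff_of_forall_conflict hC hEF hFD hF) hF⟩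
  · rintro ⟨hED, hE, hmax⟩
    exact ⟨subset_sdiff_of_forall_conflict hC subset_rfl hED hE, hE, fun F hEF hFD hF =>
      hmax F hEF (hFD.trans Finset.sdiff_subset) hF⟩

section Split

variable {A B : Finset (DBFact Rel Attr Const)} (hAB : ∀ f ∈ A, ∀ g ∈ B, ¬ Conflict S f g)
include hAB

theorem isRepair_inter_left {E : Finset (DBFact Rel Attr Const)} (hE : isRepair S (A ∪ B) E) :
    isRepair S A (E ∩ A) := by
  obtain ⟨hEAB, hEsat, hmax⟩ := hE
  refine ⟨Finset.inter_subset_right, satFDs_mono Finset.inter_subset_left hEsat, ?_⟩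
  intro F hEF hFA hF
  have hFE : F ∪ E ∩ B = E := by
    refine hmax _ ?_ (Finset.union_subset_union hFA Finset.inter_subset_right) ?_
    · intro e he
      rcases Finset.mem_union.1 (hEAB he) with h | h
      · exact Finset.mem_union_left _ (hEF (Finset.mem_inter.2 ⟨he, h⟩))
      · exact Finset.mem_union_right _ (Finset.mem_inter.2 ⟨he, h⟩)
    · exact satFDs_union (fun f hf g hg => hAB f (hFA hf) g (Finset.mem_inter.1 hg).2) hF
        (satFDs_mono Finset.inter_subset_left hEsat)
  refine Finset.Subset.antisymm (fun x hx => ?_) hEF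
  exact Finset.mem_inter.2 ⟨hFE ▸ Finset.mem_union_left _ hx, hFA hx⟩

theorem isRepair_inter_right {E : Finset (DBFact Rel Attr Const)} (hE : isRepair S (A ∪ B) E) :
    isRepair S B (E ∩ B) := by
  rw [Finset.union_comm] at hE
  exact isRepair_inter_left (fun f hf g hg h => hAB g hg f hf h.symm) hE

theorem isRepair_union {E F : Finset (DBFact Rel Attr Const)} (hE : isRepair S A E)
    (hF : isRepair S B F) : isRepair S (A ∪ B) (E ∪ F) := by
  obtain ⟨hEA, hEsat, hEmax⟩ := hE
  obtain ⟨hFB, hFsat, hFmax⟩ := hF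
  refine ⟨Finset.union_subset_union hEA hFB,
    satFDs_union (fun f hf g hg => hAB f (hEA hf) g (hFB hg)) hEsat hFsat, ?_⟩
  intro G hEFG hGAB hG
  have hGA : G ∩ A = E := hEmax _
    (Finset.subset_inter (Finset.subset_union_left.trans hEFG) hEA)
    Finset.inter_subset_right (satFDs_mono Finset.inter_subset_left hG)
  have hGB : G ∩ B = F := hFmax _
    (Finset.subset_inter (Finset.subset_union_right.trans hEFG) hFB)
    Finset.inter_subset_right (satFDs_mono Finset.inter_subset_left hG)
  rw [← hGA, ← hGB, ← Finset.inter_union_distrib_left, Finset.inter_eq_left.2 hGAB]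

theorem card_filter_rep_union (hdisj : Disjoint A B)
    (p : Finset (DBFact Rel Attr Const) → Prop) (hp : ∀ E ⊆ A ∪ B, p E ↔ p (E ∩ A)) :
    ((rep (A ∪ B) S).filter p).card = ((rep A S).filter p).card * (rep B S).card := by
  have hparts : ∀ E F : Finset (DBFact Rel Attr Const), E ⊆ A → F ⊆ B →
      (E ∪ F) ∩ A = E ∧ (E ∪ F) ∩ B = F := fun E F hEA hFB =>
    ⟨by rw [Finset.union_inter_distrib_right, Finset.inter_eq_left.2 hEA,
        Finset.disjoint_iff_inter_eq_empty.1 (hdisj.symm.mono_left hFB), Finset.union_empty],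
      by rw [Finset.union_inter_distrib_right, Finset.inter_eq_left.2 hFB,
        Finset.disjoint_iff_inter_eq_empty.1 (hdisj.mono_left hEA), Finset.empty_union]⟩
  rw [← Finset.card_product]
  refine Finset.card_bij' (fun E _ => (E ∩ A, E ∩ B)) (fun EF _ => EF.1 ∪ EF.2)
    ?_ ?_ ?_ ?_
  · intro E hE
    obtain ⟨hErep, hpE⟩ := Finset.mem_filter.1 hE
    rw [mem_rep] at hErep
    exact Finset.mem_product.2
      ⟨Finset.mem_filter.2 ⟨mem_rep.2 (isRepair_inter_left hAB hErep), (hp E hErep.1).1 hpE⟩,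
        mem_rep.2 (isRepair_inter_right hAB hErep)⟩
  · rintro ⟨E, F⟩ hEF
    obtain ⟨hE, hF⟩ := Finset.mem_product.1 hEF
    obtain ⟨hErep, hpE⟩ := Finset.mem_filter.1 hE
    rw [mem_rep] at hErep hF
    have hrep := isRepair_union hAB hErep hF
    refine Finset.mem_filter.2 ⟨mem_rep.2 hrep, ?_⟩
    rwa [hp _ hrep.1, (hparts E F hErep.1 hF.1).1]
  · intro E hE
    rw [← Finset.inter_union_distrib_left,
      Finset.inter_eq_left.2 (mem_rep.1 (Finset.mem_filter.1 hE).1).1]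
  · rintro ⟨E, F⟩ hEF
    obtain ⟨hE, hF⟩ := Finset.mem_product.1 hEF
    obtain ⟨hEA, hFB⟩ := hparts E F (mem_rep.1 (Finset.mem_filter.1 hE).1).1 (mem_rep.1 hF).1
    exact Prod.ext hEA hFB

end Split

end Repairs

theorem entails_mono {E F : Finset (DBFact Rel Attr Const)}
    {Q : Finset (DBAtom Rel Attr Var Const)} (hEF : E ⊆ F) (hE : entails E Q) : entails F Q :=
  let ⟨h, hh⟩ := hE
  ⟨h, fun α hα => hEF (hh α hα)⟩

theorem repQ_sdiff_eq {S : Set (DBFD Rel Attr)} {C D : Finset (DBFact Rel Attr Const)}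
    {Q : Finset (DBAtom Rel Attr Var Const)}
    (hC : ∀ f ∈ C, ∀ h : Var → Const, ∃ α ∈ Q, Conflict S f (applyHom h α)) :
    repQ (D \ C) S Q = repQ D S Q := by
  ext E
  simp only [repQ, Finset.mem_filter, mem_rep, and_congr_left_iff]
  rintro ⟨h, hh⟩
  refine isRepair_sdiff_iff fun f hf => ?_
  obtain ⟨α, hα, hconf⟩ := hC f hf h
  exact ⟨_, hh α hα, hconf⟩

theorem applyHom_val_of_eq_const {h : Var → Const} {α : DBAtom Rel Attr Var Const} {A : Attr}
    {c : Const} (hc : α.val A = DBTerm.const c) : (applyHom h α).val A = c := by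
  simp [applyHom, hc]

theorem agreesAt_applyHom {h : Var → Const} {α : DBAtom Rel Attr Var Const} {A : Attr}
    (hc : ∃ c, α.val A = DBTerm.const c) : agreesAt (applyHom h α) α A := by
  obtain ⟨c, hc⟩ := hc
  rw [agreesAt, applyHom_val_of_eq_const hc, hc]

theorem exists_eq_const_of_mem_primaryPrefix {L : List (Set Attr × Set Attr)}
    {α : DBAtom Rel Attr Var Const} {xy : Set Attr × Set Attr} (hxy : xy ∈ primaryPrefix L α)
    {A : Attr} (hA : A ∈ xy.1 ∪ xy.2) : ∃ c, α.val A = DBTerm.const c := by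
  obtain ⟨j, hj, hLj⟩ := List.mem_take_iff_getElem.1 hxy
  have hnvar : ¬ chainVarAt L α j := by
    by_cases h : ∃ i, chainVarAt L α i
    · simp only [primaryIdx, dif_pos h, Option.getD_some] at hj
      exact Nat.find_min h (lt_min_iff.1 hj).1
    · exact fun hj => h ⟨j, hj⟩
  cases hv : α.val A with
  | var v =>
    exact absurd ⟨xy, by rw [List.getElem?_eq_getElem (lt_min_iff.1 hj).2, hLj], A, hA, v, hv⟩
      hnvar
  | const c => exact ⟨c, rfl⟩

section PrimaryPrefix

variable {chain : Rel → List (Set Attr × Set Attr)} {Q : Finset (DBAtom Rel Attr Var Const)}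
  {D : Finset (DBFact Rel Attr Const)}

theorem applyHom_notMem_dconf (hsjf : sjf Q) {h : Var → Const} {β : DBAtom Rel Attr Var Const}
    (hβ : β ∈ Q) : applyHom h β ∉ dconf chain Q D := by
  intro hm
  obtain ⟨-, α, hα, hrel, xy, hxy, -, B, hB, hnB⟩ := Finset.mem_filter.1 hm
  obtain rfl : α = β := hsjf α hα β hβ hrel
  exact hnB (agreesAt_applyHom (exists_eq_const_of_mem_primaryPrefix hxy (Or.inr hB)))

theorem applyHom_notMem_dind (hsjf : sjf Q) {h : Var → Const} {β : DBAtom Rel Attr Var Const}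
    (hβ : β ∈ Q) : applyHom h β ∉ dind chain Q D := by
  intro hm
  obtain ⟨-, α, hα, hrel, xy, hxy, A, hA, hnA⟩ := Finset.mem_filter.1 hm
  obtain rfl : α = β := hsjf α hα β hβ hrel
  exact hnA (agreesAt_applyHom (exists_eq_const_of_mem_primaryPrefix hxy (Or.inl hA)))

theorem entails_inter_sdiff_iff (hsjf : sjf Q) {E : Finset (DBFact Rel Attr Const)}
    (hE : E ⊆ D \ dconf chain Q D) :
    entails (E ∩ (D \ (dconf chain Q D ∪ dind chain Q D))) Q ↔ entails E Q := by
  refine ⟨entails_mono Finset.inter_subset_left,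
    fun ⟨h, hh⟩ => ⟨h, fun β hβ => Finset.mem_inter.2 ⟨hh β hβ, ?_⟩⟩⟩
  exact Finset.mem_sdiff.2 ⟨(Finset.mem_sdiff.1 (hE (hh β hβ))).1, Finset.notMem_union.2
    ⟨applyHom_notMem_dconf hsjf hβ, applyHom_notMem_dind hsjf hβ⟩⟩

theorem exists_conflict_applyHom_of_mem_dconf {f : DBFact Rel Attr Const}
    (hf : f ∈ dconf chain Q D) (h : Var → Const) :
    ∃ α ∈ Q, Conflict (chainFDs chain) f (applyHom h α) := by
  obtain ⟨-, α, hα, hrel, xy, hxy, hlhs, B, hB, hnB⟩ := Finset.mem_filter.1 hf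
  refine ⟨α, hα, ⟨α.rel, xy.1, xy.2⟩, ⟨xy, List.mem_of_mem_take hxy, rfl, rfl⟩, hrel.symm, rfl,
    fun A hA => (applyHom_val_of_eq_const (hlhs A hA)).symm, B, hB, ?_⟩
  obtain ⟨c, hc⟩ := exists_eq_const_of_mem_primaryPrefix hxy (Or.inr hB)
  rw [applyHom_val_of_eq_const hc]
  rintro rfl
  exact hnB hc

theorem agreesAt_of_mem_sdiff_dconf_union_dind {g : DBFact Rel Attr Const}
    (hg : g ∈ D \ (dconf chain Q D ∪ dind chain Q D)) {α : DBAtom Rel Attr Var Const}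
    (hα : α ∈ Q) (hrel : α.rel = g.rel) :
    ∀ xy ∈ primaryPrefix (chain α.rel) α, ∀ A ∈ xy.1 ∪ xy.2, agreesAt g α A := by
  intro xy hxy A hA
  simp only [Finset.mem_sdiff, Finset.mem_union, not_or] at hg
  obtain ⟨hgD, hgC, hgI⟩ := hg
  have hlhs : ∀ A ∈ xy.1, agreesAt g α A := fun A hA => by
    by_contra hnA
    exact hgI (Finset.mem_filter.2
      ⟨Finset.mem_sdiff.2 ⟨hgD, hgC⟩, α, hα, hrel, xy, hxy, A, hA, hnA⟩)
  rcases hA with hA | hA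
  · exact hlhs A hA
  · by_contra hnA
    exact hgC (Finset.mem_filter.2 ⟨hgD, α, hα, hrel, xy, hxy, hlhs, A, hA, hnA⟩)

theorem lhs_subset_of_mem_take_of_mem_drop {L : List (Set Attr × Set Attr)}
    (hL : L.Pairwise fun a b => a.1 ⊆ b.1) {n : ℕ} {xy XY : Set Attr × Set Attr}
    (hxy : xy ∈ L.take n) (hXY : XY ∈ L.drop n) : xy.1 ⊆ XY.1 := by
  rw [← List.take_append_drop n L, List.pairwise_append] at hL
  exact hL.2.2 xy hxy XY hXY

theorem not_conflict_of_mem_dind (hchain : ∀ R, (chain R).Pairwise fun a b => a.1 ⊆ b.1)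
    {f g : DBFact Rel Attr Const} (hg : g ∈ D \ (dconf chain Q D ∪ dind chain Q D))
    (hf : f ∈ dind chain Q D) : ¬ Conflict (chainFDs chain) g f := by
  rintro ⟨φ, ⟨XY, hXY, hl, hr⟩, hgrel, hfrel, hlhs, B, hB, hne⟩
  obtain ⟨hfDC, α, hα, hαrel, xy, hxy, A, hA, hnA⟩ := Finset.mem_filter.1 hf
  have hXYα : XY ∈ chain α.rel := (hαrel.trans hfrel) ▸ hXY
  have hagree :=
    agreesAt_of_mem_sdiff_dconf_union_dind hg hα (hαrel.trans (hfrel.trans hgrel.symm))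
  have hfagree : ∀ A ∈ φ.lhs, agreesAt g α A → agreesAt f α A := fun A hA' hgA => by
    rwa [agreesAt, ← hlhs A hA']
  rw [← List.take_append_drop ((primaryIdx (chain α.rel) α).getD (chain α.rel).length)
    (chain α.rel), List.mem_append] at hXYα
  rcases hXYα with hXYpre | hXYpost
  · refine (Finset.mem_sdiff.1 hfDC).2 (Finset.mem_filter.2 ⟨(Finset.mem_sdiff.1 hfDC).1,
      α, hα, hαrel, XY, hXYpre, fun A' hA' => ?_, B, hr ▸ hB, fun hfB => hne ?_⟩)
    · exact hfagree A' (hl ▸ hA') (hagree XY hXYpre _ (Or.inl hA'))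
    · exact DBTerm.const.inj ((hagree XY hXYpre _ (Or.inr (hr ▸ hB))).symm.trans hfB)
  · have hAφ : A ∈ φ.lhs :=
      hl ▸ lhs_subset_of_mem_take_of_mem_drop (hchain α.rel) hxy hXYpost hA
    exact hnA (hfagree A hAφ (hagree xy hxy _ (Or.inl hA)))

end PrimaryPrefix

theorem stmt_6_general {Rel Attr Var Const : Type*}
    (chain : Rel → List (Set Attr × Set Attr)) (hchain : canonicalChain chain)
    (Q : Finset (DBAtom Rel Attr Var Const)) (hsjf : sjf Q)
    (D : Finset (DBFact Rel Attr Const)) :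
    rfreq Q D (chainFDs chain) =
      rfreq Q (D \ (dconf chain Q D ∪ dind chain Q D)) (chainFDs chain) *
        (((rep (D \ dconf chain Q D) (chainFDs chain)).card : ℚ) /
          ((rep D (chainFDs chain)).card : ℚ)) := by
  set S := chainFDs chain
  set C := dconf chain Q D
  set I := dind chain Q D
  have hsplit : D \ C = D \ (C ∪ I) ∪ I := by
    rw [Finset.sdiff_union_distrib, ← Finset.sdiff_sdiff_left',
      Finset.sdiff_union_of_subset (show I ⊆ D \ C from Finset.filter_subset _ _)]
  have hdisj : Disjoint (D \ (C ∪ I)) I :=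
    Finset.sdiff_disjoint.mono_right Finset.subset_union_right
  have hnoconf : ∀ g ∈ D \ (C ∪ I), ∀ f ∈ I, ¬ Conflict S g f := fun g hg f hf =>
    not_conflict_of_mem_dind (fun R => (hchain R).1.imp fun h => h.subset) hg hf
  have hrepQ : (repQ D S Q).card = (repQ (D \ (C ∪ I)) S Q).card * (rep I S).card := by
    rw [← repQ_sdiff_eq fun f hf => exists_conflict_applyHom_of_mem_dconf hf, hsplit]
    exact card_filter_rep_union hnoconf hdisj _ fun E hE =>
      (entails_inter_sdiff_iff hsjf (hsplit ▸ hE)).symm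
  have hrep : (rep (D \ C) S).card = (rep (D \ (C ∪ I)) S).card * (rep I S).card := by
    rw [hsplit]
    simpa using card_filter_rep_union hnoconf hdisj (fun _ => True) fun _ _ => Iff.rfl
  have hpos : ((rep (D \ (C ∪ I)) S).card : ℚ) ≠ 0 := by
    exact_mod_cast (rep_nonempty _).card_pos.ne'
  simp only [rfreq, hrepQ, hrep]
  push_cast
  field_simp

/-- For a canonical set of FDs with an LHS chain and an SJFCQ `Q`,
`rfreq(Q,D,Σ) = rfreq(Q, D \ (D_conf ∪ D_ind), Σ) × (|rep(D \ D_conf,Σ)| / |rep(D,Σ)|)`. -/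
theorem stmt_6 {Rel Attr Var Const : Type*}
    (chain : Rel → List (Set Attr × Set Attr)) (hchain : canonicalChain chain)
    (Q : Finset (DBAtom Rel Attr Var Const)) (hQne : Q.Nonempty) (hsjf : sjf Q)
    (D : Finset (DBFact Rel Attr Const)) :
    rfreq Q D (chainFDs chain) =
      rfreq Q (D \ (dconf chain Q D ∪ dind chain Q D)) (chainFDs chain) *
        (((rep (D \ dconf chain Q D) (chainFDs chain)).card : ℚ) /
          ((rep D (chainFDs chain)).card : ℚ)) :=
  stmt_6_general chain hchain Q hsjf D
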